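/- Let A = (v_1, …, v_q) ⊂ ℤ^n be a homogeneous normal configuration. If every unbalanced circuit of I_A has a connector which is a K[T_1, …, T_q]-linear combination of circuits of I_A having a square-free term, then the toric ideal I_A is generated by a finite set of circuits of I_A. -/

import Mathlib

open MvPolynomial

/-- The binomial `T^a - T^b` in `K[T_1,…,T_q]`. -/
noncomputable def binom (K : Type*) [Field K] {q : ℕ} (a b : Fin q → ℕ) :
    MvPolynomial (Fin q) K :=
  monomial (Finsupp.equivFunOnFinite.symm a) 1 -
    monomial (Finsupp.equivFunOnFinite.symm b) 1

/-- The toric ideal of the configuration `v`. -/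
noncomputable def toricIdeal (K : Type*) [Field K] {n q : ℕ} (v : Fin q → Fin n → ℤ) :
    Ideal (MvPolynomial (Fin q) K) :=
  Ideal.span { f | ∃ a b : Fin q → ℕ,
    (∑ i, a i • v i) = (∑ i, b i • v i) ∧ f = binom K a b }

/-- `α` is a circuit of the configuration `v`. -/
def IsCircuitVec {n q : ℕ} (v : Fin q → Fin n → ℤ) (α : Fin q → ℤ) : Prop :=
  α ≠ 0 ∧ (∑ i, α i • v i) = 0 ∧
    (∀ β : Fin q → ℚ, (∑ i, β i • (fun l => (v i l : ℚ))) = 0 → β ≠ 0 →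
      Function.support β ⊆ Function.support α →
      Function.support β = Function.support α) ∧
    Finset.univ.gcd α = 1

def posExp {q : ℕ} (α : Fin q → ℤ) : Fin q → ℕ := fun i => (α i).toNat

def negExp {q : ℕ} (α : Fin q → ℤ) : Fin q → ℕ := fun i => (-(α i)).toNat

/-- The binomial `T^a - T^b` has a square-free term. -/
def SqFreePair {q : ℕ} (a b : Fin q → ℕ) : Prop :=
  (∀ i, a i ≤ 1) ∨ (∀ i, b i ≤ 1)

/-- `f` is a circuit of the toric ideal of `v`. -/
def IsCircuitPoly (K : Type*) [Field K] {n q : ℕ} (v : Fin q → Fin n → ℤ)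
    (f : MvPolynomial (Fin q) K) : Prop :=
  ∃ α : Fin q → ℤ, IsCircuitVec v α ∧ f = binom K (posExp α) (negExp α)

/-- `f` is a circuit of the toric ideal of `v` having a square-free term. -/
def IsSqFreeCircuitPoly (K : Type*) [Field K] {n q : ℕ} (v : Fin q → Fin n → ℤ)
    (f : MvPolynomial (Fin q) K) : Prop :=
  ∃ α : Fin q → ℤ, IsCircuitVec v α ∧ f = binom K (posExp α) (negExp α) ∧
    SqFreePair (posExp α) (negExp α)

/-- The configuration lies on an affine hyperplane off the origin. -/
def IsHomogeneousConfig {n q : ℕ} (v : Fin q → Fin n → ℤ) : Prop :=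
  ∃ w : Fin n → ℝ, ∀ i, (∑ l, w l * (v i l : ℝ)) = 1

/-- `ℕA = ℤA ∩ ℝ₊A`. -/
def IsNormalConfig {n q : ℕ} (v : Fin q → Fin n → ℤ) : Prop :=
  ∀ x : Fin n → ℤ,
    x ∈ AddSubmonoid.closure (Set.range v) ↔
      (x ∈ AddSubgroup.closure (Set.range v) ∧
        ∃ c : Fin q → ℝ, (∀ i, 0 ≤ c i) ∧ ∀ l, (x l : ℝ) = ∑ i, c i * (v i l : ℝ))

/-- The toric ideal is generated by a finite set of circuits. -/
def GenByCircuits (K : Type*) [Field K] {n q : ℕ} (v : Fin q → Fin n → ℤ) : Prop :=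
  ∃ S : Finset (MvPolynomial (Fin q) K),
    (∀ f ∈ S, IsCircuitPoly K v f) ∧
      Ideal.span (S : Set (MvPolynomial (Fin q) K)) = toricIdeal K v

/-- The toric ideal is generated by a finite set of circuits with a square-free term. -/
def GenBySqFreeCircuits (K : Type*) [Field K] {n q : ℕ} (v : Fin q → Fin n → ℤ) : Prop :=
  ∃ S : Finset (MvPolynomial (Fin q) K),
    (∀ f ∈ S, IsSqFreeCircuitPoly K v f) ∧
      Ideal.span (S : Set (MvPolynomial (Fin q) K)) = toricIdeal K v

/-- `f` is a connector of the unbalanced binomial `T^a - T^b`, where `a` is the term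
with the smaller maximal exponent and `b` the one with the larger maximal exponent. -/
def IsConnector (K : Type*) [Field K] {n q : ℕ} (v : Fin q → Fin n → ℤ)
    (a b : Fin q → ℕ) (f : MvPolynomial (Fin q) K) : Prop :=
  ∃ c d : Fin q → ℕ, f = binom K c d ∧ f ∈ toricIdeal K v ∧
    (∀ i, c i ≤ 1) ∧ (∀ i, c i ≠ 0 → a i ≠ 0) ∧ (∃ i, d i ≠ 0 ∧ b i ≠ 0)

/-- Every unbalanced circuit of the toric ideal has a connector which is a
`K[T]`-linear combination of circuits with a square-free term. -/
def ConnectorCondition (K : Type*) [Field K] {n q : ℕ} (v : Fin q → Fin n → ℤ) : Prop :=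
  ∀ α : Fin q → ℤ, IsCircuitVec v α →
    Finset.univ.sup (posExp α) < Finset.univ.sup (negExp α) →
    ∃ f : MvPolynomial (Fin q) K, IsConnector K v (posExp α) (negExp α) f ∧
      f ∈ Ideal.span { g : MvPolynomial (Fin q) K | IsSqFreeCircuitPoly K v g }

/-!
Let `J` be the ideal generated by the circuits. Since `T^a - T^b = T^(a ⊓ b) (T^γ⁺ - T^γ⁻)` for
`γ = a - b`, it suffices to put `T^γ⁺ - T^γ⁻` into `J` for every `γ` in the kernel, by induction
on `deg T^γ⁺` (which equals `deg T^γ⁻` by homogeneity). Any binomial `T^c - T^d ∈ J` with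
`c ≤ γ⁺` and `d` sharing a variable with `γ⁻` performs the induction step: modulo `J`,
`T^γ⁺ - T^γ⁻` becomes `T^(γ⁺ - c + d) - T^γ⁻`, a monomial times a binomial of smaller degree.
Such binomials come from a circuit `α` whose signs agree with those of `γ`: a connector of `α`
when `α` is unbalanced, and, when `α` is balanced, a relation `T^(γ⁺ - e_k) - T^(d + e_j)` of
smaller degree supplied by normality (both up to replacing `γ` by `-γ`). If no such relation
exists, `γ` has entries in `{-1, 0, 1}` on the support of `α`, which forces `γ = α`.
-/

section Vectors

variable {ι R : Type*}

def IsConformal [Zero R] [LT R] (x y : ι → R) : Prop :=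
  ∀ i, (0 < x i → 0 < y i) ∧ (x i < 0 → y i < 0)

theorem IsConformal.refl [Zero R] [LT R] (x : ι → R) : IsConformal x x :=
  fun _ => ⟨id, id⟩

theorem IsConformal.trans [Zero R] [Preorder R] {x y z : ι → R} (hxy : IsConformal x y)
    (hyz : IsConformal y z) : IsConformal x z :=
  fun i => ⟨fun h => (hyz i).1 ((hxy i).1 h), fun h => (hyz i).2 ((hxy i).2 h)⟩

theorem IsConformal.neg [AddCommGroup R] [PartialOrder R] [IsOrderedAddMonoid R] {x y : ι → R}
    (h : IsConformal x y) : IsConformal (-x) (-y) := by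
  intro i
  simp only [Pi.neg_apply, neg_pos, neg_lt_zero]
  exact (h i).symm

theorem IsConformal.support_subset [Zero R] [LinearOrder R] {x y : ι → R}
    (h : IsConformal x y) : Function.support x ⊆ Function.support y := by
  intro i hi
  rcases (Function.mem_support.mp hi).lt_or_gt with hneg | hpos
  · exact ((h i).2 hneg).ne
  · exact ((h i).1 hpos).ne'

theorem isConformal_of_mul_nonneg [Ring R] [LinearOrder R] [IsStrictOrderedRing R]
    {x y : ι → R} (hxy : ∀ i, 0 ≤ x i * y i) (hy : ∀ i, y i = 0 → x i = 0) :
    IsConformal x y := by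
  intro i
  have := hxy i
  refine ⟨fun hx => ?_, fun hx => ?_⟩ <;> rcases lt_trichotomy (y i) 0 with h | h | h
  · exact absurd this (mul_neg_of_pos_of_neg hx h).not_ge
  · exact absurd (hy i h) hx.ne'
  · exact h
  · exact h
  · exact absurd (hy i h) hx.ne
  · exact absurd this (mul_neg_of_neg_of_pos hx h).not_ge

theorem isConformal_intCast_iff {x y : ι → ℤ} :
    IsConformal (fun i => (x i : ℚ)) (fun i => (y i : ℚ)) ↔ IsConformal x y := by
  simp only [IsConformal, Int.cast_pos, Int.cast_lt_zero]

end Vectors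

section Kernels

variable {n q : ℕ}

def intKernel (v : Fin q → Fin n → ℤ) : Submodule ℤ (Fin q → ℤ) :=
  LinearMap.ker (Fintype.linearCombination ℤ v)

def ratKernel (v : Fin q → Fin n → ℤ) : Submodule ℚ (Fin q → ℚ) :=
  LinearMap.ker (Fintype.linearCombination ℚ fun i l => (v i l : ℚ))

variable {v : Fin q → Fin n → ℤ}

theorem mem_intKernel {γ : Fin q → ℤ} : γ ∈ intKernel v ↔ ∑ i, γ i • v i = 0 := Iff.rfl

theorem mem_ratKernel {β : Fin q → ℚ} :
    β ∈ ratKernel v ↔ ∑ i, β i • (fun l => (v i l : ℚ)) = 0 := Iff.rfl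

theorem intCast_mem_ratKernel_iff {γ : Fin q → ℤ} :
    (fun i => (γ i : ℚ)) ∈ ratKernel v ↔ γ ∈ intKernel v := by
  simp only [mem_ratKernel, mem_intKernel, funext_iff, Finset.sum_apply, Pi.smul_apply,
    smul_eq_mul, Pi.zero_apply]
  exact forall_congr' fun l => by exact_mod_cast Iff.rfl

theorem sum_smul_eq_sum_smul_iff_mem_intKernel {a b : Fin q → ℕ} :
    ∑ i, a i • v i = ∑ i, b i • v i ↔ (fun i => (a i : ℤ) - b i) ∈ intKernel v := by
  simp only [mem_intKernel, sub_smul, Finset.sum_sub_distrib, natCast_zsmul, sub_eq_zero]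

theorem posExp_neg (γ : Fin q → ℤ) : posExp (-γ) = negExp γ := by
  funext i; simp [posExp, negExp]

theorem negExp_neg (γ : Fin q → ℤ) : negExp (-γ) = posExp γ := by
  funext i; simp [posExp, negExp]

theorem sum_posExp_smul_eq_sum_negExp_smul {γ : Fin q → ℤ} (hγ : γ ∈ intKernel v) :
    ∑ i, posExp γ i • v i = ∑ i, negExp γ i • v i := by
  rw [sum_smul_eq_sum_smul_iff_mem_intKernel]
  convert hγ using 2 with i
  simp only [posExp, negExp]
  omega

end Kernels

section Homogeneous

variable {n q : ℕ} {v : Fin q → Fin n → ℤ}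

theorem IsHomogeneousConfig.sum_eq_zero (hhom : IsHomogeneousConfig v) {γ : Fin q → ℤ}
    (hγ : γ ∈ intKernel v) : ∑ i, γ i = 0 := by
  obtain ⟨w, hw⟩ := hhom
  have hl : ∀ l, ∑ i, (γ i : ℝ) * v i l = 0 := fun l => by
    exact_mod_cast by simpa [Finset.sum_apply] using congrFun (mem_intKernel.mp hγ) l
  have : (∑ i, γ i : ℝ) = 0 := calc
    (∑ i, γ i : ℝ) = ∑ i, (γ i : ℝ) * ∑ l, w l * v i l := by simp [hw]
    _ = ∑ l, w l * ∑ i, (γ i : ℝ) * v i l := by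
      simp only [Finset.mul_sum]
      rw [Finset.sum_comm]
      exact Finset.sum_congr rfl fun _ _ => Finset.sum_congr rfl fun _ _ => by ring
    _ = 0 := by simp [hl]
  exact_mod_cast this

theorem IsHomogeneousConfig.sum_eq_sum (hhom : IsHomogeneousConfig v) {a b : Fin q → ℕ}
    (hab : ∑ i, a i • v i = ∑ i, b i • v i) : ∑ i, a i = ∑ i, b i := by
  have := hhom.sum_eq_zero (sum_smul_eq_sum_smul_iff_mem_intKernel.mp hab)
  rw [Finset.sum_sub_distrib, sub_eq_zero] at this
  exact_mod_cast this

def posDeg (γ : Fin q → ℤ) : ℕ := ∑ i, posExp γ i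

theorem IsHomogeneousConfig.posDeg_neg (hhom : IsHomogeneousConfig v) {γ : Fin q → ℤ}
    (hγ : γ ∈ intKernel v) : posDeg (-γ) = posDeg γ := by
  rw [posDeg, posDeg, posExp_neg, hhom.sum_eq_sum (sum_posExp_smul_eq_sum_negExp_smul hγ)]

theorem posDeg_sub_add_sum_inf (a b : Fin q → ℕ) :
    posDeg (fun i => (a i : ℤ) - b i) + ∑ i, (a ⊓ b) i = ∑ i, a i := by
  rw [posDeg, ← Finset.sum_add_distrib]
  refine Finset.sum_congr rfl fun i _ => ?_
  simp only [posExp, Pi.inf_apply]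
  omega

end Homogeneous

section Circuits

variable {n q : ℕ} {v : Fin q → Fin n → ℤ}

theorem IsCircuitVec.neg {α : Fin q → ℤ} (hα : IsCircuitVec v α) : IsCircuitVec v (-α) := by
  obtain ⟨hα0, hker, hmin, hgcd⟩ := hα
  refine ⟨neg_ne_zero.mpr hα0, mem_intKernel.mp ((intKernel v).neg_mem hker), ?_, ?_⟩
  · rw [Function.support_neg]
    exact hmin
  · refine Int.eq_one_of_dvd_one Finset.Int.finsetGcd_nonneg (hgcd ▸ Finset.dvd_gcd fun i _ => ?_)
    simpa using (Finset.gcd_dvd (f := -α) (Finset.mem_univ i)).neg_right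

theorem IsCircuitVec.smul_eq_smul {α : Fin q → ℤ} (hα : IsCircuitVec v α) {β : Fin q → ℚ}
    (hβ : β ∈ ratKernel v) (hsupp : Function.support β ⊆ Function.support α) (i₀ : Fin q) :
    (α i₀ : ℚ) • β = β i₀ • fun i => (α i : ℚ) := by
  by_cases hαi₀ : α i₀ = 0
  · have hβi₀ : β i₀ = 0 := Function.notMem_support.mp fun h => hsupp h hαi₀
    simp [hαi₀, hβi₀]
  by_contra hne
  set x := (α i₀ : ℚ) • β - β i₀ • fun i => (α i : ℚ)
  have hx : x ∈ ratKernel v :=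
    sub_mem (Submodule.smul_mem _ _ hβ)
      (Submodule.smul_mem _ _ (intCast_mem_ratKernel_iff.mpr hα.2.1))
  have hxsupp : Function.support x ⊆ Function.support α := by
    intro i hi hαi
    have hβi : β i = 0 := Function.notMem_support.mp fun h => hsupp h hαi
    simp [x, hαi, hβi] at hi
  have hxi₀ : x i₀ = 0 := by simp [x, mul_comm]
  have := hα.2.2.1 x hx (sub_ne_zero.mpr hne) hxsupp
  exact (this ▸ hαi₀ : i₀ ∈ Function.support x) hxi₀

/-- `γ` is a multiple of the primitive vector `α` by `smul_eq_smul`, and `|γ i| ≤ 1` forces the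
factor to be `1`. -/
theorem IsCircuitVec.eq_of_isConformal {α γ : Fin q → ℤ} (hα : IsCircuitVec v α)
    (hγ : γ ∈ intKernel v) (hαγ : IsConformal α γ) (hγα : ∀ i, γ i ≠ 0 → α i ≠ 0)
    (hγ1 : ∀ i, |γ i| ≤ 1) : α = γ := by
  obtain ⟨i₀, hi₀⟩ : ∃ i, α i ≠ 0 := Function.ne_iff.mp hα.1
  have hprop : ∀ i, α i₀ * γ i = γ i₀ * α i := fun i => by
    have := congrFun (hα.smul_eq_smul (intCast_mem_ratKernel_iff.mpr hγ)
      (fun j hj => hγα j (by simpa using hj)) i₀) i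
    simp only [Pi.smul_apply, smul_eq_mul] at this
    exact_mod_cast this
  have hγi₀ : γ i₀ * γ i₀ = 1 := by
    have h0 : γ i₀ ≠ 0 := hαγ.support_subset hi₀
    have := abs_le.mp (hγ1 i₀)
    rcases (show γ i₀ = 1 ∨ γ i₀ = -1 by omega) with h | h <;> simp [h]
  have hs : 0 < α i₀ * γ i₀ := by
    rcases hi₀.lt_or_gt with h | h
    · exact mul_pos_of_neg_of_neg h ((hαγ i₀).2 h)
    · exact mul_pos h ((hαγ i₀).1 h)
  have hαs : ∀ i, α i = α i₀ * γ i₀ * γ i := fun i => by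
    linear_combination (-γ i₀) * hprop i - α i * hγi₀
  have hs1 : α i₀ * γ i₀ = 1 :=
    Int.eq_one_of_dvd_one hs.le (hα.2.2.2 ▸ Finset.dvd_gcd fun i _ => ⟨γ i, hαs i⟩)
  funext i
  rw [hαs i, hs1, one_mul]

end Circuits

section ConformalCircuits

theorem exists_primitive_intVec {ι : Type*} [Fintype ι] {β : ι → ℚ} (hβ : β ≠ 0) :
    ∃ (α : ι → ℤ) (s : ℚ), 0 < s ∧ β = s • (fun i => (α i : ℚ)) ∧ Finset.univ.gcd α = 1 := by
  classical
  set N := ∏ j, (β j).den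
  have hN : (0 : ℚ) < N := by exact_mod_cast Finset.prod_pos fun j _ => (β j).pos
  -- `α₀ = N • β` is integral since `N` is a common denominator
  set α₀ : ι → ℤ := fun i => (β i).num * (N / (β i).den : ℕ)
  have hα₀ : ∀ i, (α₀ i : ℚ) = N * β i := fun i => by
    obtain ⟨t, ht⟩ := Finset.dvd_prod_of_mem (fun j => (β j).den) (Finset.mem_univ i)
    simp only [α₀, N, ht, Nat.mul_div_cancel_left t (β i).pos]
    push_cast
    rw [← Rat.mul_den_eq_num (β i)]
    ring
  obtain ⟨i₀, hi₀⟩ := Function.ne_iff.mp hβ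
  obtain ⟨α, hα, hgcd⟩ := Finset.extract_gcd α₀ ⟨i₀, Finset.mem_univ _⟩
  have hg : (0 : ℚ) < Finset.univ.gcd α₀ := by
    refine Int.cast_pos.mpr (lt_of_le_of_ne Finset.Int.finsetGcd_nonneg fun h => hi₀ ?_)
    have := hα₀ i₀
    rw [hα i₀ (Finset.mem_univ _), ← h, zero_mul, Int.cast_zero] at this
    simpa [hN.ne'] using this
  refine ⟨α, Finset.univ.gcd α₀ / N, div_pos hg hN, funext fun i => ?_, hgcd⟩
  have := hα₀ i
  rw [hα i (Finset.mem_univ _), Int.cast_mul] at this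
  simp only [Pi.smul_apply, smul_eq_mul]
  rw [div_mul_eq_mul_div, eq_div_iff hN.ne']
  linarith

variable {n q : ℕ} {v : Fin q → Fin n → ℤ}

theorem exists_isConformal_support_ssubset {β β' : Fin q → ℚ} (hβ : β ∈ ratKernel v)
    (hβ' : β' ∈ ratKernel v) (hβ'0 : β' ≠ 0)
    (hsub : Function.support β' ⊂ Function.support β) :
    ∃ β₂ ∈ ratKernel v, β₂ ≠ 0 ∧ IsConformal β₂ β ∧
      Function.support β₂ ⊂ Function.support β := by
  classical
  wlog hpos : ∃ i, 0 < β i * β' i generalizing β'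
  · obtain ⟨i₀, hi₀⟩ := Function.ne_iff.mp hβ'0
    refine this (β' := -β') (neg_mem hβ') (neg_ne_zero.mpr hβ'0) (by rwa [Function.support_neg])
      ⟨i₀, ?_⟩
    have hβi₀ : β i₀ ≠ 0 := hsub.subset hi₀
    push Not at hpos
    simpa using lt_of_le_of_ne (hpos i₀) (mul_ne_zero hβi₀ hi₀)
  -- subtract the largest multiple of `β'` that keeps the signs of `β`
  obtain ⟨a, ha, hmin⟩ := Finset.exists_min_image (Finset.univ.filter fun i => 0 < β i * β' i)
    (fun i => β i / β' i) (by simpa [Finset.filter_nonempty_iff] using hpos)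
  have ha : 0 < β a * β' a := (Finset.mem_filter.mp ha).2
  have hβ'a : β' a ≠ 0 := right_ne_zero_of_mul ha.ne'
  set t := β a / β' a with ht_def
  have ht : 0 < t := div_pos_iff.mpr (mul_pos_iff.mp ha)
  have hsupp : ∀ i, β i = 0 → β' i = 0 := fun i h =>
    Function.notMem_support.mp fun h' => hsub.subset h' h
  have hconf : IsConformal (β - t • β') β := by
    refine isConformal_of_mul_nonneg (fun i => ?_) (fun i h => by simp [h, hsupp i h])
    simp only [Pi.sub_apply, Pi.smul_apply, smul_eq_mul]
    by_cases hi : 0 < β i * β' i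
    · have hti : t ≤ β i / β' i := hmin i (Finset.mem_filter.mpr ⟨Finset.mem_univ _, hi⟩)
      have hβ'i : β' i ≠ 0 := right_ne_zero_of_mul hi.ne'
      have : β i / β' i * (β i * β' i) = β i * β i := by field_simp
      nlinarith [mul_le_mul_of_nonneg_right hti hi.le]
    · nlinarith [mul_self_nonneg (β i)]
  obtain ⟨b, hbβ, hbβ'⟩ := Set.exists_of_ssubset hsub
  have hb : (β - t • β') b = β b := by simp [Function.notMem_support.mp hbβ']
  refine ⟨β - t • β', sub_mem hβ (Submodule.smul_mem _ _ hβ'), fun h => hbβ ?_, hconf,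
    (Set.ssubset_iff_of_subset hconf.support_subset).mpr ⟨a, left_ne_zero_of_mul ha.ne', ?_⟩⟩
  · have := congrFun h b
    rwa [hb] at this
  · simp [ht_def, div_mul_cancel₀ _ hβ'a]

theorem exists_minimal_isConformal {β : Fin q → ℚ} (hβ : β ∈ ratKernel v) (hβ0 : β ≠ 0) :
    ∃ β' ∈ ratKernel v, β' ≠ 0 ∧ IsConformal β' β ∧
      ∀ β'' ∈ ratKernel v, β'' ≠ 0 → Function.support β'' ⊆ Function.support β' →
        Function.support β'' = Function.support β' := by
  induction hN : (Function.support β).ncard using Nat.strong_induction_on generalizing β with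
  | _ N ih =>
    by_cases hmin : ∀ β'' ∈ ratKernel v, β'' ≠ 0 → Function.support β'' ⊆ Function.support β →
        Function.support β'' = Function.support β
    · exact ⟨β, hβ, hβ0, .refl β, hmin⟩
    push Not at hmin
    obtain ⟨β'', hβ'', hβ''0, hsub, hne⟩ := hmin
    obtain ⟨β₂, hβ₂, hβ₂0, hconf, hss⟩ :=
      exists_isConformal_support_ssubset hβ hβ'' hβ''0 (hsub.ssubset_of_ne hne)
    obtain ⟨β', hβ', hβ'0, hconf', hmin'⟩ :=
      ih _ (hN ▸ Set.ncard_lt_ncard hss) hβ₂ hβ₂0 rfl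
    exact ⟨β', hβ', hβ'0, hconf'.trans hconf, hmin'⟩

theorem exists_isCircuitVec_of_minimal {β : Fin q → ℚ} (hβ : β ∈ ratKernel v) (hβ0 : β ≠ 0)
    (hmin : ∀ β'' ∈ ratKernel v, β'' ≠ 0 → Function.support β'' ⊆ Function.support β →
      Function.support β'' = Function.support β) :
    ∃ α, IsCircuitVec v α ∧ IsConformal (fun i => (α i : ℚ)) β := by
  obtain ⟨α, s, hs, rfl, hgcd⟩ := exists_primitive_intVec hβ0
  have hsupp : Function.support (s • fun i => (α i : ℚ)) = Function.support α := by
    rw [Function.support_const_smul_of_ne_zero _ _ hs.ne']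
    exact Function.support_comp_eq Int.cast (by simp) α
  have hker : α ∈ intKernel v := by
    rw [← intCast_mem_ratKernel_iff]
    simpa [smul_smul, hs.ne'] using Submodule.smul_mem _ s⁻¹ hβ
  refine ⟨α, ⟨fun h => hβ0 (by subst h; ext; simp), hker, fun β'' hβ'' hβ''0 hsub => ?_, hgcd⟩,
    fun i => ?_⟩
  · rw [← hsupp] at hsub ⊢
    exact hmin β'' hβ'' hβ''0 hsub
  · simp only [Pi.smul_apply, smul_eq_mul]
    exact ⟨mul_pos hs, mul_neg_of_pos_of_neg hs⟩

theorem exists_isCircuitVec_isConformal {γ : Fin q → ℤ} (hγ : γ ∈ intKernel v) (hγ0 : γ ≠ 0) :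
    ∃ α, IsCircuitVec v α ∧ IsConformal α γ := by
  obtain ⟨β, hβ, hβ0, hβγ, hmin⟩ := exists_minimal_isConformal (intCast_mem_ratKernel_iff.mpr hγ)
    (fun h => hγ0 (funext fun i => by simpa using congrFun h i))
  obtain ⟨α, hα, hαβ⟩ := exists_isCircuitVec_of_minimal hβ hβ0 hmin
  exact ⟨α, hα, isConformal_intCast_iff.mp (hαβ.trans hβγ)⟩

end ConformalCircuits

section Binomials

noncomputable def monomialOf (R : Type*) [CommSemiring R] {q : ℕ} (a : Fin q → ℕ) :
    MvPolynomial (Fin q) R :=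
  monomial (Finsupp.equivFunOnFinite.symm a) 1

theorem monomialOf_add {R : Type*} [CommSemiring R] {q : ℕ} (a b : Fin q → ℕ) :
    monomialOf R (a + b) = monomialOf R a * monomialOf R b := by
  rw [monomialOf, monomialOf, monomialOf, monomial_mul, mul_one]
  congr 2
  exact Finsupp.ext fun _ => rfl

variable {K : Type*} [Field K] {n q : ℕ} {v : Fin q → Fin n → ℤ}

theorem binom_eq_sub (a b : Fin q → ℕ) : binom K a b = monomialOf K a - monomialOf K b := rfl

noncomputable def intBinom (K : Type*) [Field K] (γ : Fin q → ℤ) :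
    MvPolynomial (Fin q) K :=
  binom K (posExp γ) (negExp γ)

theorem intBinom_neg (γ : Fin q → ℤ) : intBinom K (-γ) = -intBinom K γ := by
  rw [intBinom, intBinom, binom_eq_sub, binom_eq_sub, posExp_neg, negExp_neg, neg_sub]

theorem intBinom_zero : intBinom K (0 : Fin q → ℤ) = 0 := by
  have : posExp (0 : Fin q → ℤ) = negExp 0 := by funext i; simp [posExp, negExp]
  rw [intBinom, this, binom_eq_sub, sub_self]

theorem binom_eq_monomialOf_mul_intBinom (a b : Fin q → ℕ) :
    binom K a b = monomialOf K (a ⊓ b) * intBinom K (fun i => (a i : ℤ) - b i) := by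
  rw [intBinom, binom_eq_sub, binom_eq_sub, mul_sub, ← monomialOf_add, ← monomialOf_add]
  congr 2 <;> funext i <;> simp only [Pi.add_apply, Pi.inf_apply, posExp, negExp] <;> omega

theorem intBinom_mem_toricIdeal {γ : Fin q → ℤ} (hγ : γ ∈ intKernel v) :
    intBinom K γ ∈ toricIdeal K v :=
  Ideal.subset_span ⟨_, _, sum_posExp_smul_eq_sum_negExp_smul hγ, rfl⟩

noncomputable def monomialMap (K : Type*) [Field K] (v : Fin q → Fin n → ℤ) :
    MvPolynomial (Fin q) K →ₐ[K] AddMonoidAlgebra K (Fin n → ℤ) :=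
  aeval fun i => AddMonoidAlgebra.single (v i) 1

theorem monomialMap_monomialOf (a : Fin q → ℕ) :
    monomialMap K v (monomialOf K a) = AddMonoidAlgebra.single (∑ i, a i • v i) 1 := by
  rw [monomialMap, monomialOf, aeval_monomial, map_one, one_mul,
    Finsupp.prod_fintype _ _ fun i => pow_zero _]
  simp only [AddMonoidAlgebra.single_pow, one_pow]
  rw [AddMonoidAlgebra.prod_single, Finset.prod_const_one]
  rfl

theorem toricIdeal_le_ker_monomialMap : toricIdeal K v ≤ RingHom.ker (monomialMap K v) := by
  rw [toricIdeal, Ideal.span_le]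
  rintro _ ⟨a, b, hab, rfl⟩
  rw [SetLike.mem_coe, RingHom.mem_ker, binom_eq_sub, map_sub, monomialMap_monomialOf,
    monomialMap_monomialOf, hab, sub_self]

theorem sum_smul_eq_sum_smul_of_binom_mem_toricIdeal {a b : Fin q → ℕ}
    (h : binom K a b ∈ toricIdeal K v) : ∑ i, a i • v i = ∑ i, b i • v i := by
  have := toricIdeal_le_ker_monomialMap h
  rw [RingHom.mem_ker, binom_eq_sub, map_sub, monomialMap_monomialOf, monomialMap_monomialOf,
    sub_eq_zero] at this
  exact (AddMonoidAlgebra.single_left_inj one_ne_zero).mp this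

end Binomials

section Reduction

variable {K : Type*} [Field K] {n q : ℕ} {v : Fin q → Fin n → ℤ}
  {J : Ideal (MvPolynomial (Fin q) K)}

def KerBinomsMemBelow (K : Type*) [Field K] (v : Fin q → Fin n → ℤ)
    (J : Ideal (MvPolynomial (Fin q) K)) (D : ℕ) : Prop :=
  ∀ γ ∈ intKernel v, posDeg γ < D → intBinom K γ ∈ J

theorem KerBinomsMemBelow.binom_mem {D : ℕ} (hJ : KerBinomsMemBelow K v J D) {a b : Fin q → ℕ}
    (hab : ∑ i, a i • v i = ∑ i, b i • v i) (hD : posDeg (fun i => (a i : ℤ) - b i) < D) :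
    binom K a b ∈ J := by
  rw [binom_eq_monomialOf_mul_intBinom]
  exact J.mul_mem_left _ (hJ _ (sum_smul_eq_sum_smul_iff_mem_intKernel.mp hab) hD)

theorem KerBinomsMemBelow.intBinom_mem_of_reducer (hhom : IsHomogeneousConfig v)
    {γ : Fin q → ℤ} (hγ : γ ∈ intKernel v) (hJ : KerBinomsMemBelow K v J (posDeg γ))
    {c d : Fin q → ℕ} (hcd : ∑ i, c i • v i = ∑ i, d i • v i) (hcdJ : binom K c d ∈ J)
    (hc : c ≤ posExp γ) {k : Fin q} (hdk : d k ≠ 0) (hγk : negExp γ k ≠ 0) :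
    intBinom K γ ∈ J := by
  set u := posExp γ - c + d
  have key : intBinom K γ = monomialOf K (posExp γ - c) * binom K c d + binom K u (negExp γ) := by
    rw [intBinom, binom_eq_sub, binom_eq_sub, binom_eq_sub, mul_sub, ← monomialOf_add,
      ← monomialOf_add, tsub_add_cancel_of_le hc]
    ring
  have hu : ∑ i, u i • v i = ∑ i, negExp γ i • v i := by
    rw [sum_smul_eq_sum_smul_iff_mem_intKernel]
    convert add_mem hγ (sum_smul_eq_sum_smul_iff_mem_intKernel.mp hcd.symm) using 1
    funext i
    have := hc i
    simp only [u, Pi.add_apply, Pi.sub_apply, posExp, negExp] at this ⊢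
    omega
  have hdeg : ∑ i, u i = posDeg γ :=
    (hhom.sum_eq_sum hu).trans (hhom.sum_eq_sum (sum_posExp_smul_eq_sum_negExp_smul hγ)).symm
  have hinf : 1 ≤ ∑ i, (u ⊓ negExp γ) i :=
    le_trans (by simp only [u, Pi.inf_apply, Pi.add_apply]; omega)
      (Finset.single_le_sum (fun i _ => Nat.zero_le ((u ⊓ negExp γ) i)) (Finset.mem_univ k))
  have := posDeg_sub_add_sum_inf u (negExp γ)
  rw [key]
  exact J.add_mem (J.mul_mem_left _ hcdJ) (hJ.binom_mem hu (by omega))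

theorem KerBinomsMemBelow.intBinom_mem_of_connector (hhom : IsHomogeneousConfig v)
    {γ α : Fin q → ℤ} (hγ : γ ∈ intKernel v) (hJ : KerBinomsMemBelow K v J (posDeg γ))
    (hαγ : IsConformal α γ) {f : MvPolynomial (Fin q) K}
    (hf : IsConnector K v (posExp α) (negExp α) f) (hfJ : f ∈ J) : intBinom K γ ∈ J := by
  obtain ⟨c, d, rfl, hfT, hc1, hcα, k, hdk, hαk⟩ := hf
  refine hJ.intBinom_mem_of_reducer hhom hγ (sum_smul_eq_sum_smul_of_binom_mem_toricIdeal hfT) hfJ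
    (fun i => ?_) hdk ?_
  · have := hc1 i
    have := hcα i
    have := (hαγ i).1
    simp only [posExp] at *
    omega
  · have := (hαγ k).2
    simp only [negExp] at *
    omega

/-- Subtracting the kernel vector `α / (-α j)` from the coefficients `γ⁺ - e_k - e_j` makes them
nonnegative without moving the point they represent, so normality puts that point in `ℕA`. -/
theorem IsNormalConfig.exists_sum_smul_eq (hnorm : IsNormalConfig v) {γ α : Fin q → ℤ}
    (hα : α ∈ intKernel v) (hαγ : IsConformal α γ) {j : Fin q} (hj : α j < 0)
    (hαj : ∀ i, α i ≤ -α j) {k : Fin q} (hk : 0 < γ k) (hk' : α k ≤ 0 ∨ 2 ≤ γ k) :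
    ∃ d : Fin q → ℕ,
      ∑ i, (posExp γ - Pi.single k 1 : Fin q → ℕ) i • v i =
        ∑ i, (d + Pi.single j 1 : Fin q → ℕ) i • v i := by
  classical
  set e : Fin q → ℤ := fun i =>
    posExp γ i - (Pi.single k 1 : Fin q → ℤ) i - (Pi.single j 1 : Fin q → ℤ) i
  have hkj : k ≠ j := fun h => by subst h; have := (hαγ k).2 hj; omega
  have hαe : ∀ i, α i ≤ e i * -α j := fun i => by
    have hαi := hαj i
    have hconf := hαγ i
    by_cases hik : i = k
    · subst hik
      have he : e i = γ i - 1 := by simp [e, hkj, posExp]; omega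
      rw [he]
      rcases hk' with h | h <;> nlinarith
    · by_cases hij : i = j
      · subst hij
        have he : e i = -1 := by simp [e, hik, posExp]; omega
        simp [he]
      · have he : e i = posExp γ i := by simp [e, hik, hij]
        rw [he]
        simp only [posExp]
        rcases le_or_gt (α i) 0 with h | h
        · nlinarith [Int.natCast_nonneg (γ i).toNat]
        · have : (((γ i).toNat : ℕ) : ℤ) = γ i := Int.toNat_of_nonneg (hconf.1 h).le
          nlinarith [hconf.1 h]
  have hM : (0 : ℝ) < -α j := by exact_mod_cast neg_pos.mpr hj
  have hcone : ∑ i, e i • v i ∈ AddSubmonoid.closure (Set.range v) := by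
    refine (hnorm _).mpr ⟨AddSubgroup.mem_closure_range_iff_of_fintype.mpr ⟨e, rfl⟩,
      fun i => e i - α i / (-α j : ℝ), fun i => ?_, fun l => ?_⟩
    · rw [sub_nonneg, div_le_iff₀ hM]
      exact_mod_cast hαe i
    · have hαl : ∑ i, (α i : ℝ) * v i l = 0 := by
        exact_mod_cast by simpa [Finset.sum_apply] using congrFun (mem_intKernel.mp hα) l
      simp only [sub_mul, Finset.sum_sub_distrib, div_mul_eq_mul_div, ← Finset.sum_div, hαl,
        zero_div, sub_zero, Finset.sum_apply, Pi.smul_apply, smul_eq_mul]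
      push_cast
      rfl
  obtain ⟨d, hd⟩ := AddSubmonoid.mem_closure_range_iff_of_fintype.mp hcone
  refine ⟨d, sum_smul_eq_sum_smul_iff_mem_intKernel.mpr ?_⟩
  have : (fun i => (((posExp γ - Pi.single k 1 : Fin q → ℕ) i : ℕ) : ℤ) -
      ((d + Pi.single j 1 : Fin q → ℕ) i : ℕ)) =
      e - fun i => (d i : ℤ) := by
    funext i
    simp only [e, posExp, Pi.sub_apply, Pi.add_apply, Pi.single_apply]
    split_ifs <;> simp_all <;> omega
  rw [this, mem_intKernel]
  simp only [Pi.sub_apply, sub_smul, Finset.sum_sub_distrib, natCast_zsmul, ← hd, sub_self]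

theorem KerBinomsMemBelow.intBinom_mem_of_isNormalConfig (hhom : IsHomogeneousConfig v)
    (hnorm : IsNormalConfig v) {γ α : Fin q → ℤ} (hγ : γ ∈ intKernel v)
    (hJ : KerBinomsMemBelow K v J (posDeg γ)) (hα : α ∈ intKernel v) (hαγ : IsConformal α γ)
    {j : Fin q} (hj : α j < 0) (hαj : ∀ i, α i ≤ -α j) {k : Fin q} (hk : 0 < γ k)
    (hk' : α k ≤ 0 ∨ 2 ≤ γ k) : intBinom K γ ∈ J := by
  classical
  obtain ⟨d, hd⟩ := hnorm.exists_sum_smul_eq hα hαγ hj hαj hk hk'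
  have hlt : ∑ i, (posExp γ - Pi.single k 1 : Fin q → ℕ) i < posDeg γ :=
    Finset.sum_lt_sum (fun i _ => tsub_le_self) ⟨k, Finset.mem_univ _, by simp [posExp]; omega⟩
  have := posDeg_sub_add_sum_inf (posExp γ - Pi.single k 1) (d + Pi.single j 1)
  refine hJ.intBinom_mem_of_reducer hhom hγ hd (hJ.binom_mem hd (by omega)) (fun i => tsub_le_self)
    (k := j) (by simp) ?_
  have := (hαγ j).2 hj
  simp only [negExp]
  omega

end Reduction

section CircuitIdeal

variable {K : Type*} [Field K] {n q : ℕ} {v : Fin q → Fin n → ℤ}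

noncomputable def circuitIdeal (K : Type*) [Field K] (v : Fin q → Fin n → ℤ) :
    Ideal (MvPolynomial (Fin q) K) :=
  Ideal.span {f | IsCircuitPoly K v f}

theorem span_isSqFreeCircuitPoly_le_circuitIdeal :
    Ideal.span {f | IsSqFreeCircuitPoly K v f} ≤ circuitIdeal K v :=
  Ideal.span_mono fun _ ⟨α, hα, hf, _⟩ => ⟨α, hα, hf⟩

theorem IsCircuitVec.intBinom_mem_circuitIdeal {α : Fin q → ℤ} (hα : IsCircuitVec v α) :
    intBinom K α ∈ circuitIdeal K v :=
  Ideal.subset_span ⟨α, hα, rfl⟩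

theorem exists_neg_forall_le_of_sup_le {α : Fin q → ℤ} (hα : α ≠ 0)
    (hle : Finset.univ.sup (posExp α) ≤ Finset.univ.sup (negExp α)) :
    ∃ j, α j < 0 ∧ ∀ i, α i ≤ -α j := by
  obtain ⟨i₀, hi₀⟩ : ∃ i, α i ≠ 0 := Function.ne_iff.mp hα
  obtain ⟨j, -, hj⟩ := Finset.exists_mem_eq_sup Finset.univ ⟨i₀, Finset.mem_univ _⟩ (negExp α)
  have hpos : ∀ i, posExp α i ≤ negExp α j := fun i =>
    hj ▸ (Finset.le_sup (Finset.mem_univ i)).trans hle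
  have hneg : negExp α i₀ ≤ negExp α j := hj ▸ Finset.le_sup (Finset.mem_univ i₀)
  have hj : α j < 0 := by
    have := hpos i₀
    simp only [posExp, negExp] at *
    omega
  refine ⟨j, hj, fun i => ?_⟩
  have := hpos i
  simp only [posExp, negExp] at *
  omega

theorem intBinom_mem_circuitIdeal_of_kerBinomsMemBelow (hhom : IsHomogeneousConfig v)
    (hnorm : IsNormalConfig v) (hconn : ConnectorCondition K v) {γ : Fin q → ℤ}
    (hγ : γ ∈ intKernel v) (hJ : KerBinomsMemBelow K v (circuitIdeal K v) (posDeg γ)) :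
    intBinom K γ ∈ circuitIdeal K v := by
  rcases eq_or_ne γ 0 with rfl | hγ0
  · rw [intBinom_zero]
    exact Ideal.zero_mem _
  obtain ⟨α, hα, hαγ⟩ := exists_isCircuitVec_isConformal hγ hγ0
  wlog hle : Finset.univ.sup (posExp α) ≤ Finset.univ.sup (negExp α) generalizing γ α
  · have := this (neg_mem hγ) (by rwa [hhom.posDeg_neg hγ]) (neg_ne_zero.mpr hγ0) (-α) hα.neg
      hαγ.neg (by rw [posExp_neg, negExp_neg]; exact (not_le.mp hle).le)
    simpa [intBinom_neg] using this
  rcases hle.lt_or_eq with hlt | heq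
  · obtain ⟨f, hf, hfspan⟩ := hconn α hα hlt
    exact hJ.intBinom_mem_of_connector hhom hγ hαγ hf
      (span_isSqFreeCircuitPoly_le_circuitIdeal hfspan)
  obtain ⟨j, hj, hαj⟩ := exists_neg_forall_le_of_sup_le hα.1 heq.le
  obtain ⟨j', hj', hαj'⟩ := exists_neg_forall_le_of_sup_le (neg_ne_zero.mpr hα.1)
    (by rw [posExp_neg, negExp_neg]; exact heq.ge)
  by_cases hk : ∃ k, 0 < γ k ∧ (α k ≤ 0 ∨ 2 ≤ γ k)
  · obtain ⟨k, hk, hk'⟩ := hk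
    exact hJ.intBinom_mem_of_isNormalConfig hhom hnorm hγ hα.2.1 hαγ hj hαj hk hk'
  by_cases hkneg : ∃ k, 0 < (-γ) k ∧ ((-α) k ≤ 0 ∨ 2 ≤ (-γ) k)
  · obtain ⟨k, hk, hk'⟩ := hkneg
    have hJ' : KerBinomsMemBelow K v (circuitIdeal K v) (posDeg (-γ)) := by
      rwa [hhom.posDeg_neg hγ]
    simpa [intBinom_neg] using hJ'.intBinom_mem_of_isNormalConfig hhom hnorm (neg_mem hγ)
      (neg_mem hα.2.1) hαγ.neg hj' hαj' hk hk'
  push Not at hk hkneg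
  have hαγ' : α = γ := hα.eq_of_isConformal hγ hαγ
    (fun i _ => by have := hk i; have := hkneg i; simp only [Pi.neg_apply] at *; omega)
    (fun i => abs_le.mpr (by have := hk i; have := hkneg i; simp only [Pi.neg_apply] at *; omega))
  exact hαγ' ▸ hα.intBinom_mem_circuitIdeal

end CircuitIdeal

theorem circuitIdeal_eq_toricIdeal {K : Type*} [Field K] {n q : ℕ} {v : Fin q → Fin n → ℤ}
    (hhom : IsHomogeneousConfig v) (hnorm : IsNormalConfig v) (hconn : ConnectorCondition K v) :
    circuitIdeal K v = toricIdeal K v := by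
  have hker : ∀ γ ∈ intKernel v, intBinom K γ ∈ circuitIdeal K v := by
    intro γ hγ
    induction hD : posDeg γ using Nat.strong_induction_on generalizing γ with
    | _ D ih =>
      exact intBinom_mem_circuitIdeal_of_kerBinomsMemBelow hhom hnorm hconn hγ
        fun δ hδ hlt => ih _ (hD ▸ hlt) δ hδ rfl
  refine le_antisymm (Ideal.span_le.mpr ?_) (Ideal.span_le.mpr ?_)
  · rintro _ ⟨α, hα, rfl⟩
    exact intBinom_mem_toricIdeal hα.2.1
  · rintro _ ⟨a, b, hab, rfl⟩
    exact KerBinomsMemBelow.binom_mem (D := _ + 1) (fun γ hγ _ => hker γ hγ) hab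
      (Nat.lt_succ_self _)

theorem connectorCondition_imp_genByCircuits_general (K : Type*) [Field K] {n q : ℕ}
    (v : Fin q → Fin n → ℤ)
    (hhom : IsHomogeneousConfig v) (hnorm : IsNormalConfig v)
    (h : ConnectorCondition K v) : GenByCircuits K v := by
  obtain ⟨S, hS, hspan⟩ := (Submodule.fg_span_iff_fg_span_finset_subset _).mp
    (IsNoetherian.noetherian (circuitIdeal K v))
  exact ⟨S, hS, hspan.symm.trans (circuitIdeal_eq_toricIdeal hhom hnorm h)⟩

/-- If every unbalanced circuit of the toric ideal of a homogeneous normal configuration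
has a connector which is a `K[T]`-linear combination of circuits with a square-free term,
then the toric ideal is generated by a finite set of circuits. -/
theorem connectorCondition_imp_genByCircuits (K : Type*) [Field K] {n q : ℕ}
    (hn : 0 < n) (hq : 0 < q) (v : Fin q → Fin n → ℤ)
    (hhom : IsHomogeneousConfig v) (hnorm : IsNormalConfig v)
    (h : ConnectorCondition K v) : GenByCircuits K v :=
  connectorCondition_imp_genByCircuits_general K v hhom hnorm h
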